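/- arXiv:1305.4891 — 2 statements merged into one kernel-verified Lean document; each statement's English description precedes it below -/
import Mathlib

section
/- Let (X̄, Ȳ) be an optimal solution of the convex program min{‖X‖_* + γ‖Y‖₁ : eᵀXe = k², X_{ij} + Y_{ij} = 0 for all ij ∈ Ẽ, X ∈ [0,1]^{V×V}} such that X̄ = v̄ v̄ᵀ for the characteristic vector v̄ of a k-subset V̄, and Ȳ = −P_{Ẽ}(X̄). Then for every other k-subset V̂ with X̂ = v̂ v̂ᵀ and Ŷ = −P_{Ẽ}(X̂), we have ‖Ŷ‖₁ ≥ ‖Ȳ‖₁, and hence d(G(V̂)) ≤ d(G(V̄)); i.e., G(V̄) is a maximum density k-subgraph of G. -/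
/-!
For the characteristic vector `v` of a `k`-set, `‖v vᵀ‖_* = v ⬝ᵥ v = k`: the supremum of
`⟨v, U v⟩` over spectral contractions `U` is attained at `U = 1`. Hence all feasible pairs built
from `k`-sets have the same nuclear norm, and optimality of `(X̄, Ȳ)` compares the `ℓ₁` terms
alone. The `ℓ₁` norm of `−P_Ẽ(v vᵀ)` counts the ordered pairs of distinct non-adjacent vertices
of the `k`-set, which is `k(k-1)` minus twice its number of edges.
-/

open Matrix Finset

variable {V : Type*} [Fintype V] [DecidableEq V]

noncomputable def specNorm (A : Matrix V V ℝ) : ℝ :=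
  ‖LinearMap.toContinuousLinearMap (Matrix.toEuclideanLin A)‖

/-- Nuclear norm of a real square matrix, via duality with the spectral norm. -/
noncomputable def nuclearNorm (A : Matrix V V ℝ) : ℝ :=
  sSup {x : ℝ | ∃ U : Matrix V V ℝ, specNorm U ≤ 1 ∧ x = Matrix.trace (Aᵀ * U)}

def l1Norm (A : Matrix V V ℝ) : ℝ := ∑ i, ∑ j, |A i j|

lemma dotProduct_mulVec_le_specNorm_mul (U : Matrix V V ℝ) (v : V → ℝ) :
    v ⬝ᵥ (U *ᵥ v) ≤ specNorm U * (v ⬝ᵥ v) := by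
  set L := LinearMap.toContinuousLinearMap (Matrix.toEuclideanLin U)
  set w : EuclideanSpace ℝ V := WithLp.toLp 2 v
  have hw : ‖w‖ ^ 2 = v ⬝ᵥ v := by
    rw [← real_inner_self_eq_norm_sq, EuclideanSpace.inner_toLp_toLp]; simp
  calc v ⬝ᵥ (U *ᵥ v) = inner ℝ w (L w) := by
        simp [L, w, EuclideanSpace.inner_toLp_toLp, dotProduct_comm]
    _ ≤ ‖w‖ * ‖L w‖ := real_inner_le_norm _ _
    _ ≤ ‖w‖ * (‖L‖ * ‖w‖) := by gcongr; exact L.le_opNorm w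
    _ = specNorm U * (v ⬝ᵥ v) := by rw [specNorm, ← hw]; ring

lemma specNorm_one_le : specNorm (1 : Matrix V V ℝ) ≤ 1 := by
  have : LinearMap.toContinuousLinearMap (Matrix.toEuclideanLin (1 : Matrix V V ℝ))
      = ContinuousLinearMap.id ℝ (EuclideanSpace ℝ V) := by
    ext x; simp
  rw [specNorm, this]
  exact ContinuousLinearMap.norm_id_le

lemma trace_transpose_vecMulVec_self_mul {n R : Type*} [Fintype n] [CommSemiring R]
    (v : n → R) (U : Matrix n n R) :
    trace ((vecMulVec v v)ᵀ * U) = v ⬝ᵥ (U *ᵥ v) := by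
  rw [transpose_vecMulVec, vecMulVec_mul, trace_vecMulVec, dotProduct_comm, dotProduct_mulVec]

lemma nuclearNorm_vecMulVec_self (v : V → ℝ) : nuclearNorm (vecMulVec v v) = v ⬝ᵥ v := by
  have hub : ∀ x ∈ {x : ℝ | ∃ U : Matrix V V ℝ, specNorm U ≤ 1 ∧
      x = trace ((vecMulVec v v)ᵀ * U)}, x ≤ v ⬝ᵥ v := by
    rintro x ⟨U, hU, rfl⟩
    rw [trace_transpose_vecMulVec_self_mul]
    calc v ⬝ᵥ (U *ᵥ v) ≤ specNorm U * (v ⬝ᵥ v) := dotProduct_mulVec_le_specNorm_mul U v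
      _ ≤ 1 * (v ⬝ᵥ v) := by gcongr; exact dotProduct_self_star_nonneg v
      _ = v ⬝ᵥ v := one_mul _
  have hmem : v ⬝ᵥ v ∈ {x : ℝ | ∃ U : Matrix V V ℝ, specNorm U ≤ 1 ∧
      x = trace ((vecMulVec v v)ᵀ * U)} :=
    ⟨1, specNorm_one_le, by rw [trace_transpose_vecMulVec_self_mul, one_mulVec]⟩
  exact le_antisymm (csSup_le ⟨_, hmem⟩ hub) (le_csSup ⟨_, hub⟩ hmem)

section charVec

variable {ι : Type*} [DecidableEq ι]

def charVec (S : Finset ι) : ι → ℝ := fun i => if i ∈ S then 1 else 0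

lemma sum_vecMulVec_charVec [Fintype ι] (S : Finset ι) :
    ∑ i, ∑ j, vecMulVec (charVec S) (charVec S) i j = (#S : ℝ) ^ 2 := by
  simp only [vecMulVec_apply, ← Finset.sum_mul_sum, charVec, sum_boole, sq]
  simp

lemma vecMulVec_charVec_mem_Icc (S : Finset ι) (i j : ι) :
    vecMulVec (charVec S) (charVec S) i j ∈ Set.Icc 0 1 := by
  simp only [vecMulVec_apply, charVec]
  split_ifs <;> norm_num

lemma charVec_dotProduct_self [Fintype ι] (S : Finset ι) : charVec S ⬝ᵥ charVec S = #S := by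
  simp [dotProduct, charVec]

end charVec

open SimpleGraph

lemma two_mul_card_edges_within (G : SimpleGraph V) [DecidableRel G.Adj] (S : Finset V) :
    2 * #{e ∈ G.edgeFinset | ∀ v ∈ e, v ∈ S} = #{p ∈ S.offDiag | G.Adj p.1 p.2} := by
  classical
  set H := ((⊤ : G.Subgraph).induce S).spanningCoe
  have hedges : H.edgeFinset = {e ∈ G.edgeFinset | ∀ v ∈ e, v ∈ S} := by
    ext e
    induction e using Sym2.ind with
    | _ a b =>
      simp only [H, mem_edgeFinset, Subgraph.edgeSet_spanningCoe, Subgraph.mem_edgeSet,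
        Subgraph.induce_adj, SetLike.mem_coe, Subgraph.top_adj, mem_filter, mem_edgeSet,
        Sym2.mem_iff, forall_eq_or_imp, forall_eq]
      tauto
  have hdarts : ({p | H.Adj p.1 p.2} : Finset (V × V)) = {p ∈ S.offDiag | G.Adj p.1 p.2} := by
    ext ⟨a, b⟩
    simp only [H, mem_filter, mem_univ, true_and, mem_offDiag, Subgraph.spanningCoe_adj,
      Subgraph.induce_adj, mem_coe, Subgraph.top_adj]
    grind [SimpleGraph.Adj.ne]
  rw [← hedges, H.two_mul_card_edgeFinset, ← hdarts]

lemma card_offDiag_filter_not_adj_add_two_mul_card_edges_within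
    (G : SimpleGraph V) [DecidableRel G.Adj] (S : Finset V) :
    #{p ∈ S.offDiag | ¬ G.Adj p.1 p.2} + 2 * #{e ∈ G.edgeFinset | ∀ v ∈ e, v ∈ S}
      = #S.offDiag := by
  rw [two_mul_card_edges_within, add_comm]
  exact card_filter_add_card_filter_not _

lemma l1Norm_eq_card_offDiag_filter_not_adj (G : SimpleGraph V) [DecidableRel G.Adj]
    (S : Finset V) (Y : Matrix V V ℝ)
    (hY : ∀ i j, Y i j = if i ≠ j ∧ ¬ G.Adj i j then -vecMulVec (charVec S) (charVec S) i j
      else 0) :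
    l1Norm Y = #{p ∈ S.offDiag | ¬ G.Adj p.1 p.2} := by
  have habs : ∀ i j, |Y i j| = if (i, j) ∈ S.offDiag ∧ ¬ G.Adj i j then 1 else 0 := by
    intro i j
    simp only [hY, vecMulVec_apply, charVec, mem_offDiag]
    split_ifs <;> simp_all
  rw [l1Norm]
  simp only [habs]
  rw [← sum_product', sum_boole]
  congr 2
  ext p
  simp

theorem stmt14_general (G : SimpleGraph V) [DecidableRel G.Adj]
    (k : ℕ) (γ : ℝ) (hγ : 0 < γ)
    (Feas : Matrix V V ℝ → Matrix V V ℝ → Prop)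
    (hFeas : ∀ X Y, Feas X Y ↔
      ((∑ i, ∑ j, X i j) = (k : ℝ) ^ 2 ∧
       (∀ i j, (i ≠ j ∧ ¬ G.Adj i j) → X i j + Y i j = 0) ∧
       (∀ i j, 0 ≤ X i j ∧ X i j ≤ 1)))
    (d : Finset V → ℝ)
    (hd : ∀ V' : Finset V,
      d V' = ((G.edgeFinset.filter (fun e => ∀ v ∈ e, v ∈ V')).card : ℝ) / k)
    (Vb : Finset V) (hVb : Vb.card = k)
    (vb : V → ℝ) (hvb : ∀ i, vb i = if i ∈ Vb then 1 else 0)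
    (Xb Yb : Matrix V V ℝ) (hXb : Xb = Matrix.vecMulVec vb vb)
    (hYb : ∀ i j, Yb i j = if i ≠ j ∧ ¬ G.Adj i j then -(Xb i j) else 0)
    (hopt : ∀ X Y, Feas X Y →
      nuclearNorm Xb + γ * l1Norm Yb ≤ nuclearNorm X + γ * l1Norm Y) :
    ∀ (Vh : Finset V), Vh.card = k →
      ∀ (vh : V → ℝ), (∀ i, vh i = if i ∈ Vh then 1 else 0) →
      ∀ (Xh Yh : Matrix V V ℝ), Xh = Matrix.vecMulVec vh vh →
      (∀ i j, Yh i j = if i ≠ j ∧ ¬ G.Adj i j then -(Xh i j) else 0) →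
      l1Norm Yb ≤ l1Norm Yh ∧ d Vh ≤ d Vb := by
  intro Vh hVh vh hvh Xh Yh hXh hYh
  obtain rfl : vb = charVec Vb := funext hvb
  obtain rfl : vh = charVec Vh := funext hvh
  subst hXb hXh
  have hfeas_h : Feas (vecMulVec (charVec Vh) (charVec Vh)) Yh :=
    (hFeas _ _).2 ⟨by rw [sum_vecMulVec_charVec, hVh],
      fun i j hij => by rw [hYh, if_pos hij, add_neg_cancel],
      vecMulVec_charVec_mem_Icc Vh⟩
  have hl1 : l1Norm Yb ≤ l1Norm Yh := by
    have h := hopt _ _ hfeas_h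
    rw [nuclearNorm_vecMulVec_self, nuclearNorm_vecMulVec_self, charVec_dotProduct_self,
      charVec_dotProduct_self, hVb, hVh, add_le_add_iff_left] at h
    exact le_of_mul_le_mul_left h hγ
  refine ⟨hl1, ?_⟩
  rw [l1Norm_eq_card_offDiag_filter_not_adj G Vb Yb hYb,
    l1Norm_eq_card_offDiag_filter_not_adj G Vh Yh hYh, Nat.cast_le] at hl1
  have hb := card_offDiag_filter_not_adj_add_two_mul_card_edges_within G Vb
  have hh := card_offDiag_filter_not_adj_add_two_mul_card_edges_within G Vh
  rw [offDiag_card, hVb] at hb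
  rw [offDiag_card, hVh] at hh
  have hE : #{e ∈ G.edgeFinset | ∀ v ∈ e, v ∈ Vh} ≤ #{e ∈ G.edgeFinset | ∀ v ∈ e, v ∈ Vb} := by
    omega
  rw [hd, hd]
  exact div_le_div_of_nonneg_right (by exact_mod_cast hE) k.cast_nonneg

/-- If `(X̄, Ȳ)`, built from a `k`-subset `V̄` as
`X̄ = v̄v̄ᵀ`, `Ȳ = −P_{Ẽ}(X̄)`, is optimal for
`min{‖X‖_* + γ‖Y‖₁ : eᵀXe = k², X_{ij}+Y_{ij}=0 ∀ij∈Ẽ, X∈[0,1]^{V×V}}`, then for every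
other `k`-subset `V̂` (with `X̂ = v̂v̂ᵀ`, `Ŷ = −P_{Ẽ}(X̂)`) we have `‖Ŷ‖₁ ≥ ‖Ȳ‖₁` and
`d(G(V̂)) ≤ d(G(V̄))`; i.e. `G(V̄)` is a maximum density `k`-subgraph of `G`. -/
theorem stmt14 (G : SimpleGraph V) [DecidableRel G.Adj]
    (k : ℕ) (hk : 1 ≤ k) (γ : ℝ) (hγ : 0 < γ)
    (Feas : Matrix V V ℝ → Matrix V V ℝ → Prop)
    (hFeas : ∀ X Y, Feas X Y ↔
      ((∑ i, ∑ j, X i j) = (k : ℝ) ^ 2 ∧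
       (∀ i j, (i ≠ j ∧ ¬ G.Adj i j) → X i j + Y i j = 0) ∧
       (∀ i j, 0 ≤ X i j ∧ X i j ≤ 1)))
    (d : Finset V → ℝ)
    (hd : ∀ V' : Finset V,
      d V' = ((G.edgeFinset.filter (fun e => ∀ v ∈ e, v ∈ V')).card : ℝ) / k)
    (Vb : Finset V) (hVb : Vb.card = k)
    (vb : V → ℝ) (hvb : ∀ i, vb i = if i ∈ Vb then 1 else 0)
    (Xb Yb : Matrix V V ℝ) (hXb : Xb = Matrix.vecMulVec vb vb)
    (hYb : ∀ i j, Yb i j = if i ≠ j ∧ ¬ G.Adj i j then -(Xb i j) else 0)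
    (hfeas : Feas Xb Yb)
    (hopt : ∀ X Y, Feas X Y →
      nuclearNorm Xb + γ * l1Norm Yb ≤ nuclearNorm X + γ * l1Norm Y) :
    ∀ (Vh : Finset V), Vh.card = k →
      ∀ (vh : V → ℝ), (∀ i, vh i = if i ∈ Vh then 1 else 0) →
      ∀ (Xh Yh : Matrix V V ℝ), Xh = Matrix.vecMulVec vh vh →
      (∀ i j, Yh i j = if i ≠ j ∧ ¬ G.Adj i j then -(Xh i j) else 0) →
      l1Norm Yb ≤ l1Norm Yh ∧ d Vh ≤ d Vb :=
  stmt14_general G k γ hγ Feas hFeas d hd Vb hVb vb hvb Xb Yb hXb hYb hopt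
end

section
/- Suppose there exist multipliers F, W ∈ ℝ^{V×V}, λ ≥ 0, and M ∈ ℝ_+^{V×V} satisfying: X̄/k + W − λeeᵀ − γ(Ȳ + F) + M = 0; W v̄ = Wᵀ v̄ = 0 and ‖W‖ ≤ 1; P_Ω(F) = 0 and ‖F‖_∞ ≤ 1; F_{ij} = 0 for all (i,j) ∈ E ∪ {vv : v ∈ V}; and M_{ij} = 0 for all (i,j) ∉ V̄×V̄, where X̄ = v̄v̄ᵀ, Ω = (V̄×V̄) ∩ Ẽ, and Ȳ = −P_{Ẽ}(X̄). Then (X̄, Ȳ) is an optimal solution of min{‖X‖_* + γ‖Y‖₁ : eᵀXe = k², X_{ij} + Y_{ij} = 0 ∀ ij ∈ Ẽ, X ∈ [0,1]^{V×V}}. -/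
open Matrix Finset

variable {V : Type*} [Fintype V] [DecidableEq V]

/-!
Weak duality. Put `D = X̄/k + W` and `Z = Ȳ + F`. Since `v̄v̄ᵀ/k` and `W` act on the orthogonal
subspaces `ℝv̄` and `v̄ᗮ`, `‖D‖ ≤ 1`; the conditions on `F` give `|Z_ij| ≤ 1`. Hence
`⟨X, D⟩ + γ⟨Y, Z⟩ ≤ ‖X‖_* + γ‖Y‖₁` for every `(X, Y)`. By stationarity `D = λeeᵀ + γZ - M`,
and `Z` vanishes off `Ẽ`, where `X + Y = 0`; so for feasible `(X, Y)` the left side equals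
`λk² - ⟨X, M⟩ ≥ λk² - ∑ M`. At `(X̄, Ȳ)` every one of these inequalities is an equality
(complementary slackness), so `λk² - ∑ M` is both the value at `(X̄, Ȳ)` and a lower bound.
-/

open InnerProductSpace RealInnerProductSpace in
theorem norm_inv_smul_rankOne_add_le_one {E : Type*} [NormedAddCommGroup E]
    [InnerProductSpace ℝ E] (u : E) (T : E →L[ℝ] E) (hT : ‖T‖ ≤ 1) (hTu : T u = 0)
    (hu : ∀ x, ⟪u, T x⟫ = 0) : ‖(‖u‖ ^ 2)⁻¹ • rankOne ℝ u u + T‖ ≤ 1 := by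
  refine ContinuousLinearMap.opNorm_le_bound _ zero_le_one fun x => ?_
  -- `a • u` is the orthogonal projection of `x` on `ℝ u`: `T` kills it and maps into `(ℝ u)ᗮ`.
  set a := (‖u‖ ^ 2)⁻¹ * ⟪u, x⟫
  have ha : a * ‖u‖ ^ 2 = ⟪x, u⟫ := by
    rcases eq_or_ne u 0 with rfl | hu0
    · simp
    · have : ‖u‖ ^ 2 ≠ 0 := by positivity
      simp only [a, real_inner_comm u]
      field_simp
  have hTx : ‖T x‖ ^ 2 ≤ ‖x‖ ^ 2 - a ^ 2 * ‖u‖ ^ 2 := by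
    calc ‖T x‖ ^ 2 = ‖T (x - a • u)‖ ^ 2 := by rw [map_sub, map_smul, hTu, smul_zero, sub_zero]
      _ ≤ ‖x - a • u‖ ^ 2 := by
          gcongr
          exact T.le_of_opNorm_le hT _ |>.trans_eq (one_mul _)
      _ = ‖x‖ ^ 2 - a ^ 2 * ‖u‖ ^ 2 := by
          rw [norm_sub_sq_real, inner_smul_right, norm_smul, Real.norm_eq_abs, mul_pow, sq_abs,
            ← ha]
          ring
  have hDx : ((‖u‖ ^ 2)⁻¹ • rankOne ℝ u u + T) x = a • u + T x := by
    simp [a, mul_smul]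
  rw [one_mul, hDx, ← sq_le_sq₀ (norm_nonneg _) (norm_nonneg _)]
  calc ‖a • u + T x‖ ^ 2 = a ^ 2 * ‖u‖ ^ 2 + ‖T x‖ ^ 2 := by
        rw [norm_add_sq_real, inner_smul_left, hu, norm_smul, Real.norm_eq_abs, mul_pow, sq_abs]
        ring
    _ ≤ ‖x‖ ^ 2 := by linarith

open WithLp

section Entrywise

variable {ι : Type*} [Fintype ι]

theorem norm_toLp_sq (x : ι → ℝ) : ‖toLp 2 x‖ ^ 2 = x ⬝ᵥ x := by
  rw [← real_inner_self_eq_norm_sq, EuclideanSpace.inner_toLp_toLp, star_trivial]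

theorem trace_transpose_mul_eq_sum (A U : Matrix ι ι ℝ) :
    Matrix.trace (Aᵀ * U) = ∑ i, ∑ j, A i j * U i j := by
  simp only [Matrix.trace, Matrix.diag, mul_apply, transpose_apply]
  exact Finset.sum_comm

theorem sum_vecMulVec_mul (u : ι → ℝ) (U : Matrix ι ι ℝ) :
    ∑ i, ∑ j, vecMulVec u u i j * U i j = u ⬝ᵥ (U *ᵥ u) := by
  simp only [dotProduct, mulVec, vecMulVec_apply, Finset.mul_sum]
  exact Finset.sum_congr rfl fun i _ => Finset.sum_congr rfl fun j _ => by ring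

theorem sum_mul_le_l1Norm (Y : Matrix ι ι ℝ) {Z : Matrix ι ι ℝ} (hZ : ∀ i j, |Z i j| ≤ 1) :
    ∑ i, ∑ j, Y i j * Z i j ≤ l1Norm Y := by
  unfold l1Norm
  gcongr with i _ j _
  calc Y i j * Z i j ≤ |Y i j| * |Z i j| := by rw [← abs_mul]; exact le_abs_self _
    _ ≤ |Y i j| := mul_le_of_le_one_right (abs_nonneg _) (hZ i j)

theorem abs_add_le_one_of_eq_zero_or {y f : ℝ} (h : y = 0 ∨ (|y| = 1 ∧ f = 0)) (hf : |f| ≤ 1) :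
    |y + f| ≤ 1 := by
  rcases h with rfl | ⟨hy, rfl⟩
  · simpa using hf
  · simpa using hy.le

theorem abs_eq_mul_add_of_eq_zero_or {y f : ℝ} (h : y = 0 ∨ (|y| = 1 ∧ f = 0)) :
    |y| = y * (y + f) := by
  rcases h with rfl | ⟨hy, rfl⟩
  · simp
  · rw [add_zero, ← abs_mul_self, abs_mul, hy, one_mul]

theorem l1Norm_eq_sum_mul_add {Y F : Matrix ι ι ℝ}
    (h : ∀ i j, Y i j = 0 ∨ (|Y i j| = 1 ∧ F i j = 0)) :
    l1Norm Y = ∑ i, ∑ j, Y i j * (Y + F) i j :=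
  Finset.sum_congr rfl fun i _ => Finset.sum_congr rfl fun j _ =>
    abs_eq_mul_add_of_eq_zero_or (h i j)

theorem sum_mul_add_sum_mul_eq {D Z M X Y : Matrix ι ι ℝ} {lam γ : ℝ}
    (hD : ∀ i j, D i j = lam + γ * Z i j - M i j) (hXY : ∀ i j, (X i j + Y i j) * Z i j = 0) :
    ∑ i, ∑ j, X i j * D i j + γ * ∑ i, ∑ j, Y i j * Z i j
      = lam * ∑ i, ∑ j, X i j - ∑ i, ∑ j, X i j * M i j := by
  simp only [Finset.mul_sum, ← Finset.sum_add_distrib, ← Finset.sum_sub_distrib]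
  refine Finset.sum_congr rfl fun i _ => Finset.sum_congr rfl fun j _ => ?_
  rw [hD]
  linear_combination γ * hXY i j

theorem sum_vecMulVec_mul_inv_smul_vecMulVec_add (u : ι → ℝ) {W : Matrix ι ι ℝ}
    (hWu : W *ᵥ u = 0) :
    ∑ i, ∑ j, vecMulVec u u i j * ((u ⬝ᵥ u)⁻¹ • vecMulVec u u + W) i j = u ⬝ᵥ u := by
  rw [sum_vecMulVec_mul, add_mulVec, smul_mulVec, vecMulVec_mulVec, hWu]
  rcases eq_or_ne (u ⬝ᵥ u) 0 with h | h <;> simp [h]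

end Entrywise

theorem abs_dotProduct_mulVec_le (U : Matrix V V ℝ) (x y : V → ℝ) :
    |x ⬝ᵥ (U *ᵥ y)| ≤ specNorm U * ‖toLp 2 x‖ * ‖toLp 2 y‖ := by
  calc |x ⬝ᵥ (U *ᵥ y)| = |inner ℝ (toLp 2 x) (toLp 2 (U *ᵥ y))| := by
        rw [EuclideanSpace.inner_toLp_toLp, star_trivial, dotProduct_comm]
    _ ≤ ‖toLp 2 x‖ * ‖toLp 2 (U *ᵥ y)‖ := abs_real_inner_le_norm _ _
    _ ≤ ‖toLp 2 x‖ * (specNorm U * ‖toLp 2 y‖) := by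
        gcongr
        exact (LinearMap.toContinuousLinearMap (toEuclideanLin U)).le_opNorm (toLp 2 y)
    _ = specNorm U * ‖toLp 2 x‖ * ‖toLp 2 y‖ := by ring

theorem abs_apply_le_specNorm (U : Matrix V V ℝ) (i j : V) : |U i j| ≤ specNorm U := by
  simpa [PiLp.norm_single] using abs_dotProduct_mulVec_le U (Pi.single i 1) (Pi.single j 1)

theorem specNorm_inv_smul_vecMulVec_add_le_one {u : V → ℝ} {W : Matrix V V ℝ}
    (hW : specNorm W ≤ 1) (hWu : W *ᵥ u = 0) (hWtu : Wᵀ *ᵥ u = 0) :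
    specNorm ((u ⬝ᵥ u)⁻¹ • vecMulVec u u + W) ≤ 1 := by
  have key := norm_inv_smul_rankOne_add_le_one (toLp 2 u)
    (LinearMap.toContinuousLinearMap (toEuclideanLin W)) hW ?_ ?_
  · rw [norm_toLp_sq] at key
    unfold specNorm
    convert key using 2
    ext x i
    simp [vecMulVec_mulVec, EuclideanSpace.inner_eq_star_dotProduct, dotProduct_comm u, mul_comm]
  · simp [toLpLin_toLp, hWu]
  · intro x
    rw [EuclideanSpace.inner_eq_star_dotProduct]
    simp [dotProduct_comm, dotProduct_mulVec, ← mulVec_transpose, hWtu]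

theorem sum_mul_le_nuclearNorm (A : Matrix V V ℝ) {U : Matrix V V ℝ} (hU : specNorm U ≤ 1) :
    ∑ i, ∑ j, A i j * U i j ≤ nuclearNorm A := by
  refine trace_transpose_mul_eq_sum A U ▸ le_csSup ⟨l1Norm A, ?_⟩ ⟨U, hU, rfl⟩
  rintro _ ⟨U', hU', rfl⟩
  rw [trace_transpose_mul_eq_sum]
  exact sum_mul_le_l1Norm A fun i j => (abs_apply_le_specNorm U' i j).trans hU'

theorem nuclearNorm_le {A : Matrix V V ℝ} {c : ℝ}
    (h : ∀ U : Matrix V V ℝ, specNorm U ≤ 1 → ∑ i, ∑ j, A i j * U i j ≤ c) :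
    nuclearNorm A ≤ c := by
  refine csSup_le ⟨_, 0, by simp [specNorm], rfl⟩ ?_
  rintro _ ⟨U, hU, rfl⟩
  exact trace_transpose_mul_eq_sum A U ▸ h U hU

theorem nuclearNorm_vecMulVec_self_le (u : V → ℝ) : nuclearNorm (vecMulVec u u) ≤ u ⬝ᵥ u := by
  refine nuclearNorm_le fun U hU => ?_
  rw [sum_vecMulVec_mul, ← norm_toLp_sq]
  calc u ⬝ᵥ (U *ᵥ u) ≤ specNorm U * ‖toLp 2 u‖ * ‖toLp 2 u‖ :=
        (le_abs_self _).trans (abs_dotProduct_mulVec_le U u u)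
    _ ≤ ‖toLp 2 u‖ ^ 2 := by
        rw [mul_assoc, ← sq]; exact mul_le_of_le_one_left (by positivity) hU

theorem sum_mul_add_sum_mul_le_nuclearNorm_add_l1Norm {D Z : Matrix V V ℝ} {γ : ℝ}
    (hγ : 0 ≤ γ) (hD : specNorm D ≤ 1) (hZ : ∀ i j, |Z i j| ≤ 1) (X Y : Matrix V V ℝ) :
    ∑ i, ∑ j, X i j * D i j + γ * ∑ i, ∑ j, Y i j * Z i j ≤ nuclearNorm X + γ * l1Norm Y :=
  add_le_add (sum_mul_le_nuclearNorm X hD) (mul_le_mul_of_nonneg_left (sum_mul_le_l1Norm Y hZ) hγ)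

theorem nuclearNorm_add_l1Norm_le_of_kkt {S : V → V → Prop}
    {D Z M Xb Yb X Y : Matrix V V ℝ} {lam γ : ℝ} (hγ : 0 ≤ γ)
    (hDnorm : specNorm D ≤ 1) (hZ : ∀ i j, |Z i j| ≤ 1) (hZS : ∀ i j, ¬ S i j → Z i j = 0)
    (hD : ∀ i j, D i j = lam + γ * Z i j - M i j) (hM : ∀ i j, 0 ≤ M i j)
    (hXb : nuclearNorm Xb ≤ ∑ i, ∑ j, Xb i j * D i j)
    (hYb : l1Norm Yb ≤ ∑ i, ∑ j, Yb i j * Z i j)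
    (hXbM : ∑ i, ∑ j, Xb i j * M i j = ∑ i, ∑ j, M i j)
    (hXbYb : ∀ i j, S i j → Xb i j + Yb i j = 0)
    (hX : ∀ i j, X i j ≤ 1) (hXY : ∀ i j, S i j → X i j + Y i j = 0)
    (hsum : ∑ i, ∑ j, X i j = ∑ i, ∑ j, Xb i j) :
    nuclearNorm Xb + γ * l1Norm Yb ≤ nuclearNorm X + γ * l1Norm Y := by
  have vanish : ∀ {A B : Matrix V V ℝ}, (∀ i j, S i j → A i j + B i j = 0) →
      ∀ i j, (A i j + B i j) * Z i j = 0 := fun hAB i j => by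
    by_cases h : S i j
    · rw [hAB i j h, zero_mul]
    · rw [hZS i j h, mul_zero]
  calc nuclearNorm Xb + γ * l1Norm Yb
      ≤ ∑ i, ∑ j, Xb i j * D i j + γ * ∑ i, ∑ j, Yb i j * Z i j :=
        add_le_add hXb (mul_le_mul_of_nonneg_left hYb hγ)
    _ = lam * ∑ i, ∑ j, X i j - ∑ i, ∑ j, M i j := by
        rw [sum_mul_add_sum_mul_eq hD (vanish hXbYb), hsum, hXbM]
    _ ≤ lam * ∑ i, ∑ j, X i j - ∑ i, ∑ j, X i j * M i j := by
        gcongr with i _ j _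
        exact mul_le_of_le_one_left (hM i j) (hX i j)
    _ = ∑ i, ∑ j, X i j * D i j + γ * ∑ i, ∑ j, Y i j * Z i j :=
        (sum_mul_add_sum_mul_eq hD (vanish hXY)).symm
    _ ≤ nuclearNorm X + γ * l1Norm Y :=
        sum_mul_add_sum_mul_le_nuclearNorm_add_l1Norm hγ hDnorm hZ X Y

section Indicator

variable {ι : Type*} [DecidableEq ι] {s : Finset ι} {v : ι → ℝ}

theorem vecMulVec_apply_of_indicator (hv : ∀ i, v i = if i ∈ s then 1 else 0) (i j : ι) :
    vecMulVec v v i j = if i ∈ s ∧ j ∈ s then 1 else 0 := by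
  rw [vecMulVec_apply, hv, hv]
  split_ifs <;> simp_all

variable [Fintype ι]

theorem dotProduct_self_of_indicator (hv : ∀ i, v i = if i ∈ s then 1 else 0) :
    v ⬝ᵥ v = s.card := by
  simp [dotProduct, hv]

theorem sum_vecMulVec_of_indicator (hv : ∀ i, v i = if i ∈ s then 1 else 0) :
    ∑ i, ∑ j, vecMulVec v v i j = (s.card : ℝ) ^ 2 := by
  simp [vecMulVec_apply, hv, sq]

theorem sum_vecMulVec_mul_of_indicator (hv : ∀ i, v i = if i ∈ s then 1 else 0)
    {M : Matrix ι ι ℝ} (hM : ∀ i j, ¬ (i ∈ s ∧ j ∈ s) → M i j = 0) :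
    ∑ i, ∑ j, vecMulVec v v i j * M i j = ∑ i, ∑ j, M i j := by
  refine Finset.sum_congr rfl fun i _ => Finset.sum_congr rfl fun j _ => ?_
  rw [vecMulVec_apply_of_indicator hv]
  split_ifs with h
  · rw [one_mul]
  · rw [hM i j h, mul_zero]

end Indicator

theorem stmt19_general (G : SimpleGraph V) [DecidableRel G.Adj]
    (k : ℕ) (γ : ℝ) (hγ : 0 < γ)
    (Vb : Finset V) (hVb : Vb.card = k)
    (vb : V → ℝ) (hvb : ∀ i, vb i = if i ∈ Vb then 1 else 0)
    (Xb Yb : Matrix V V ℝ) (hXb : Xb = Matrix.vecMulVec vb vb)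
    (hYb : ∀ i j, Yb i j = if i ≠ j ∧ ¬ G.Adj i j then -(Xb i j) else 0)
    (F W M : Matrix V V ℝ) (lam : ℝ)
    (hM : ∀ i j, 0 ≤ M i j)
    -- stationarity: X̄/k + W − λeeᵀ − γ(Ȳ + F) + M = 0
    (hstat : (1 / (k : ℝ)) • Xb + W
      - lam • Matrix.vecMulVec (fun _ => (1 : ℝ)) (fun _ => (1 : ℝ))
      - γ • (Yb + F) + M = 0)
    (hWv : W *ᵥ vb = 0) (hWtv : Wᵀ *ᵥ vb = 0) (hWnorm : specNorm W ≤ 1)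
    -- P_Ω(F) = 0 where Ω = (V̄×V̄) ∩ Ẽ
    (hFΩ : ∀ i j, (i ∈ Vb ∧ j ∈ Vb ∧ i ≠ j ∧ ¬ G.Adj i j) → F i j = 0)
    (hFinf : ∀ i j, |F i j| ≤ 1)
    -- F vanishes on E ∪ {vv : v ∈ V}
    (hFE : ∀ i j, (G.Adj i j ∨ i = j) → F i j = 0)
    -- M vanishes off V̄ × V̄
    (hMoff : ∀ i j, ¬ (i ∈ Vb ∧ j ∈ Vb) → M i j = 0)
    -- feasibility predicate for the convex program
    (Feas : Matrix V V ℝ → Matrix V V ℝ → Prop)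
    (hFeas : ∀ X Y, Feas X Y ↔
      ((∑ i, ∑ j, X i j) = (k : ℝ) ^ 2 ∧
       (∀ i j, (i ≠ j ∧ ¬ G.Adj i j) → X i j + Y i j = 0) ∧
       (∀ i j, 0 ≤ X i j ∧ X i j ≤ 1))) :
    Feas Xb Yb ∧
    ∀ X Y, Feas X Y →
      nuclearNorm Xb + γ * l1Norm Yb ≤ nuclearNorm X + γ * l1Norm Y := by
  have hvv : vb ⬝ᵥ vb = k := hVb ▸ dotProduct_self_of_indicator hvb
  have hXbij : ∀ i j, Xb i j = if i ∈ Vb ∧ j ∈ Vb then 1 else 0 := fun i j =>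
    hXb ▸ vecMulVec_apply_of_indicator hvb i j
  have hXbsum : ∑ i, ∑ j, Xb i j = (k : ℝ) ^ 2 := hXb ▸ hVb ▸ sum_vecMulVec_of_indicator hvb
  have hD : ∀ i j,
      ((vb ⬝ᵥ vb)⁻¹ • vecMulVec vb vb + W) i j = lam + γ * (Yb + F) i j - M i j := by
    intro i j
    have := congrFun (congrFun hstat i) j
    simp only [hvv, ← hXb, one_div, Matrix.add_apply, Matrix.sub_apply, Matrix.smul_apply,
      Matrix.zero_apply, vecMulVec_apply, smul_eq_mul] at this ⊢
    linarith
  have hYbF : ∀ i j, Yb i j = 0 ∨ (|Yb i j| = 1 ∧ F i j = 0) := by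
    intro i j
    by_cases hS : i ≠ j ∧ ¬ G.Adj i j <;> by_cases hV : i ∈ Vb ∧ j ∈ Vb
    · simp [hYb, hXbij, hS, hV, hFΩ i j ⟨hV.1, hV.2, hS⟩]
    all_goals simp [hYb, hXbij, hS, hV]
  refine ⟨(hFeas Xb Yb).2 ⟨hXbsum, fun i j h => by simp [hYb, h], fun i j => by
    rw [hXbij]; split_ifs <;> norm_num⟩, fun X Y hXY => ?_⟩
  obtain ⟨hsum, hXY, hX⟩ := (hFeas X Y).1 hXY
  exact nuclearNorm_add_l1Norm_le_of_kkt hγ.le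
    (specNorm_inv_smul_vecMulVec_add_le_one hWnorm hWv hWtv)
    (fun i j => abs_add_le_one_of_eq_zero_or (hYbF i j) (hFinf i j))
    (fun i j h => by simp [hYb, h, hFE i j (by tauto)]) hD hM
    (hXb ▸ (nuclearNorm_vecMulVec_self_le vb).trans_eq
      (sum_vecMulVec_mul_inv_smul_vecMulVec_add vb hWv).symm)
    (l1Norm_eq_sum_mul_add hYbF).le (hXb ▸ sum_vecMulVec_mul_of_indicator hvb hMoff)
    (fun i j h => by simp [hYb, h]) (fun i j => (hX i j).2) hXY (hsum.trans hXbsum.symm)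

/-- If there exist multipliers `F, W`, `λ ≥ 0`, `M ≥ 0` satisfying the
stated KKT conditions at `(X̄, Ȳ)` (with `X̄ = v̄v̄ᵀ` for the characteristic vector of a
`k`-subset `V̄`, `Ȳ = −P_{Ẽ}(X̄)`, and `Ω = (V̄×V̄) ∩ Ẽ`), then `(X̄, Ȳ)` is an optimal
solution of `min{‖X‖_* + γ‖Y‖₁ : eᵀXe = k², X+Y = 0 on Ẽ, X ∈ [0,1]^{V×V}}`. -/
theorem stmt19 (G : SimpleGraph V) [DecidableRel G.Adj]
    (k : ℕ) (hk : 1 ≤ k) (γ : ℝ) (hγ : 0 < γ)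
    (Vb : Finset V) (hVb : Vb.card = k)
    (vb : V → ℝ) (hvb : ∀ i, vb i = if i ∈ Vb then 1 else 0)
    (Xb Yb : Matrix V V ℝ) (hXb : Xb = Matrix.vecMulVec vb vb)
    (hYb : ∀ i j, Yb i j = if i ≠ j ∧ ¬ G.Adj i j then -(Xb i j) else 0)
    (F W M : Matrix V V ℝ) (lam : ℝ) (hlam : 0 ≤ lam)
    (hM : ∀ i j, 0 ≤ M i j)
    -- stationarity: X̄/k + W − λeeᵀ − γ(Ȳ + F) + M = 0
    (hstat : (1 / (k : ℝ)) • Xb + W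
      - lam • Matrix.vecMulVec (fun _ => (1 : ℝ)) (fun _ => (1 : ℝ))
      - γ • (Yb + F) + M = 0)
    (hWv : W *ᵥ vb = 0) (hWtv : Wᵀ *ᵥ vb = 0) (hWnorm : specNorm W ≤ 1)
    -- P_Ω(F) = 0 where Ω = (V̄×V̄) ∩ Ẽ
    (hFΩ : ∀ i j, (i ∈ Vb ∧ j ∈ Vb ∧ i ≠ j ∧ ¬ G.Adj i j) → F i j = 0)
    (hFinf : ∀ i j, |F i j| ≤ 1)
    -- F vanishes on E ∪ {vv : v ∈ V}
    (hFE : ∀ i j, (G.Adj i j ∨ i = j) → F i j = 0)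
    -- M vanishes off V̄ × V̄
    (hMoff : ∀ i j, ¬ (i ∈ Vb ∧ j ∈ Vb) → M i j = 0)
    -- feasibility predicate for the convex program
    (Feas : Matrix V V ℝ → Matrix V V ℝ → Prop)
    (hFeas : ∀ X Y, Feas X Y ↔
      ((∑ i, ∑ j, X i j) = (k : ℝ) ^ 2 ∧
       (∀ i j, (i ≠ j ∧ ¬ G.Adj i j) → X i j + Y i j = 0) ∧
       (∀ i j, 0 ≤ X i j ∧ X i j ≤ 1))) :
    Feas Xb Yb ∧
    ∀ X Y, Feas X Y →
      nuclearNorm Xb + γ * l1Norm Yb ≤ nuclearNorm X + γ * l1Norm Y :=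
  stmt19_general G k γ hγ Vb hVb vb hvb Xb Yb hXb hYb F W M lam hM hstat hWv hWtv hWnorm hFΩ hFinf
    hFE hMoff Feas hFeas
end
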